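/- Let m ≥ 1 be a natural number, let x_1, …, x_m be complex numbers, and let y be a complex number. Then ∑_{p=1}^{m} y^{p−1} · ∑_{{I_1,…,I_p} ∈ Π_p({1,…,m})} ∏_{r=1}^{p} (∑_{i ∈ I_r} x_i)^{|I_r| − 1} = (y + ∑_{i=1}^{m} x_i)^{m−1}. -/

import Mathlib

/-- `IsPartitionInto p S P` means `P` is a partition of the finset `S` into `p`
nonempty, pairwise disjoint blocks whose union is `S`. -/
def IsPartitionInto {ι : Type*} [DecidableEq ι] (p : ℕ) (S : Finset ι)
    (P : Finset (Finset ι)) : Prop :=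
  P.card = p ∧ (∅ : Finset ι) ∉ P ∧
    (∀ I ∈ P, ∀ J ∈ P, I ≠ J → Disjoint I J) ∧ P.sup id = S

instance {ι : Type*} [DecidableEq ι] (p : ℕ) (S : Finset ι) :
    DecidablePred (IsPartitionInto p S) := fun _ => by
  unfold IsPartitionInto; infer_instance

open Finset Polynomial

variable {ι : Type*} [DecidableEq ι]


lemma taylor_sub_lt {f : Polynomial ℂ} (hf : 0 < f.natDegree) (c : ℂ) :
    (Polynomial.taylor c f - f).natDegree < f.natDegree := by
  have hfne : f ≠ 0 := fun h => by simp [h] at hf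
  have htne : Polynomial.taylor c f ≠ 0 := by
    intro h
    exact hfne (Polynomial.taylor_injective c (by simpa using h))
  have hdeg : (Polynomial.taylor c f).degree = f.degree := by
    rw [Polynomial.degree_eq_natDegree htne, Polynomial.degree_eq_natDegree hfne,
      Polynomial.natDegree_taylor]
  have hlc : (Polynomial.taylor c f).leadingCoeff = f.leadingCoeff := by
    rw [Polynomial.taylor_apply]
    rw [Polynomial.leadingCoeff_comp (by simp)]
    simp [Polynomial.leadingCoeff_X_add_C]
  by_cases h0 : Polynomial.taylor c f - f = 0
  · rw [h0]; simpa using hf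
  · have := Polynomial.degree_sub_lt hdeg htne hlc
    rw [hdeg] at this
    have := Polynomial.natDegree_lt_natDegree h0 this
    exact this

lemma alt_sum (z : ι → ℂ) (T : Finset ι) : ∀ (f : Polynomial ℂ), f.natDegree < T.card →
    ∑ B ∈ T.powerset, (-1:ℂ)^(T.card - B.card) * f.eval (∑ i ∈ B, z i) = 0 := by
  induction T using Finset.induction_on with
  | empty => intro f hf; simp at hf
  | insert _ _ ht =>
    rename_i t T IH
    intro f hf
    rw [Finset.sum_powerset_insert ht]
    have hcard : (insert t T).card = T.card + 1 := Finset.card_insert_of_notMem ht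
    have h1 : ∀ B ∈ T.powerset, (-1:ℂ)^((insert t T).card - B.card) * f.eval (∑ i ∈ B, z i)
        = -((-1:ℂ)^(T.card - B.card) * f.eval (∑ i ∈ B, z i)) := by
      intro B hB
      have hBle : B.card ≤ T.card := Finset.card_le_card (Finset.mem_powerset.mp hB)
      have : (insert t T).card - B.card = (T.card - B.card) + 1 := by omega
      rw [this, pow_succ]; ring
    have h2 : ∀ B ∈ T.powerset, (-1:ℂ)^((insert t T).card - (insert t B).card)
          * f.eval (∑ i ∈ insert t B, z i)
        = (-1:ℂ)^(T.card - B.card) * (Polynomial.taylor (z t) f).eval (∑ i ∈ B, z i) := by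
      intro B hB
      have htB : t ∉ B := fun h => ht (Finset.mem_powerset.mp hB h)
      rw [Finset.card_insert_of_notMem htB, Finset.sum_insert htB, hcard,
        Polynomial.taylor_eval, Nat.add_sub_add_right, add_comm (z t)]
    rw [Finset.sum_congr rfl h1, Finset.sum_congr rfl h2, Finset.sum_neg_distrib]
    rw [neg_add_eq_sub, ← Finset.sum_sub_distrib]
    have h3 : ∀ B ∈ T.powerset,
        (-1:ℂ)^(T.card - B.card) * (Polynomial.taylor (z t) f).eval (∑ i ∈ B, z i)
          - (-1:ℂ)^(T.card - B.card) * f.eval (∑ i ∈ B, z i)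
        = (-1:ℂ)^(T.card - B.card) * (Polynomial.taylor (z t) f - f).eval (∑ i ∈ B, z i) := by
      intro B _; rw [Polynomial.eval_sub]; ring
    rw [Finset.sum_congr rfl h3]
    by_cases h0 : f.natDegree = 0
    · obtain ⟨a, rfl⟩ := Polynomial.natDegree_eq_zero.mp h0
      simp
    · exact IH _ (lt_of_lt_of_le (taylor_sub_lt (Nat.pos_of_ne_zero h0) (z t))
        (by omega))

noncomputable def hfun (z : ι → ℂ) (y : ℂ) (B : Finset ι) : ℂ :=
  if B = ∅ then 1 else y * (y + ∑ i ∈ B, z i) ^ (B.card - 1)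

lemma HN (z : ι → ℂ) : ∀ (n : ℕ) (T : Finset ι), T.card = n → ∀ X y : ℂ,
    ∑ A ∈ T.powerset, (X + ∑ i ∈ A, z i) ^ A.card * hfun z y (T \ A)
      = (X + y + ∑ i ∈ T, z i) ^ T.card := by
  intro n
  induction n using Nat.strong_induction_on with
  | _ n IH =>
  intro T hT X₀ y
  rcases Nat.eq_zero_or_pos n with h0 | hpos
  · subst h0; rw [Finset.card_eq_zero] at hT; subst hT; simp [hfun]
  subst hT
  set P : Polynomial ℂ := ∑ A ∈ T.powerset,
    Polynomial.C (hfun z y (T \ A)) * (Polynomial.X + Polynomial.C (∑ i ∈ A, z i)) ^ A.card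
    with hP
  set Q : Polynomial ℂ :=
    (Polynomial.X + Polynomial.C (y + ∑ i ∈ T, z i)) ^ T.card with hQ
  have hevalP : ∀ w : ℂ, P.eval w
      = ∑ A ∈ T.powerset, (w + ∑ i ∈ A, z i) ^ A.card * hfun z y (T \ A) := by
    intro w
    rw [hP, Polynomial.eval_finset_sum]
    exact Finset.sum_congr rfl fun A _ => by
      simp only [Polynomial.eval_mul, Polynomial.eval_C, Polynomial.eval_pow,
        Polynomial.eval_add, Polynomial.eval_X]
      ring
  have hevalQ : ∀ w : ℂ, Q.eval w = (w + y + ∑ i ∈ T, z i) ^ T.card := by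
    intro w; rw [hQ]
    simp only [Polynomial.eval_pow, Polynomial.eval_add, Polynomial.eval_X,
      Polynomial.eval_C, add_assoc]
  -- derivatives agree pointwise
  have hder : ∀ w : ℂ, (Polynomial.derivative P).eval w
      = (Polynomial.derivative Q).eval w := by
    intro w
    have hQ' : (Polynomial.derivative Q).eval w
        = (T.card : ℂ) * (w + y + ∑ i ∈ T, z i) ^ (T.card - 1) := by
      rw [hQ, Polynomial.derivative_pow]
      simp only [Polynomial.derivative_add, Polynomial.derivative_X, Polynomial.derivative_C,
        add_zero, mul_one, Polynomial.eval_mul, Polynomial.eval_C, Polynomial.eval_pow,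
        Polynomial.eval_add, Polynomial.eval_X, Polynomial.eval_natCast]
      ring_nf
    have hP' : (Polynomial.derivative P).eval w
        = ∑ A ∈ T.powerset,
            hfun z y (T \ A) * ((A.card : ℂ) * (w + ∑ i ∈ A, z i) ^ (A.card - 1)) := by
      rw [hP, map_sum, Polynomial.eval_finset_sum]
      refine Finset.sum_congr rfl fun A _ => ?_
      rw [Polynomial.derivative_C_mul, Polynomial.derivative_pow]
      simp only [Polynomial.derivative_add, Polynomial.derivative_X, Polynomial.derivative_C,
        add_zero, mul_one, Polynomial.eval_mul, Polynomial.eval_C, Polynomial.eval_pow,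
        Polynomial.eval_add, Polynomial.eval_X, Polynomial.eval_natCast]
    rw [hP', hQ']
    -- turn cardinality into a sum over marked elements
    have step1 : ∀ A ∈ T.powerset,
        hfun z y (T \ A) * ((A.card : ℂ) * (w + ∑ i ∈ A, z i) ^ (A.card - 1))
        = ∑ t ∈ T, if t ∈ A then
            hfun z y (T \ A) * (w + ∑ i ∈ A, z i) ^ (A.card - 1) else 0 := by
      intro A hA
      rw [Finset.sum_ite_mem, Finset.inter_eq_right.mpr (Finset.mem_powerset.mp hA),
        Finset.sum_const, nsmul_eq_mul]
      ring
    rw [Finset.sum_congr rfl step1, Finset.sum_comm]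
    have step2 : ∀ t ∈ T,
        (∑ A ∈ T.powerset, if t ∈ A then
            hfun z y (T \ A) * (w + ∑ i ∈ A, z i) ^ (A.card - 1) else 0)
        = (w + y + ∑ i ∈ T, z i) ^ (T.card - 1) := by
      intro t ht
      rw [Finset.sum_ite, Finset.sum_const_zero, add_zero]
      have hbij : ∑ A ∈ T.powerset.filter (t ∈ ·),
            hfun z y (T \ A) * (w + ∑ i ∈ A, z i) ^ (A.card - 1)
          = ∑ A' ∈ (T.erase t).powerset,
            (w + z t + ∑ i ∈ A', z i) ^ A'.card * hfun z y ((T.erase t) \ A') := by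
        refine Finset.sum_nbij' (fun A => A.erase t) (fun A' => insert t A') ?_ ?_ ?_ ?_ ?_
        · intro A hA
          simp only [Finset.mem_filter, Finset.mem_powerset] at hA
          exact Finset.mem_powerset.mpr (Finset.erase_subset_erase t hA.1)
        · intro A' hA'
          simp only [Finset.mem_powerset] at hA'
          simp only [Finset.mem_filter, Finset.mem_powerset]
          constructor
          · intro b hb
            rcases Finset.mem_insert.mp hb with rfl | hb
            · exact ht
            · exact Finset.mem_of_mem_erase (hA' hb)
          · exact Finset.mem_insert_self t A'
        · intro A hA
          simp only [Finset.mem_filter] at hA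
          exact Finset.insert_erase hA.2
        · intro A' hA'
          simp only [Finset.mem_powerset] at hA'
          exact Finset.erase_insert (fun h => (Finset.notMem_erase t T) (hA' h))
        · intro A hA
          simp only [Finset.mem_filter, Finset.mem_powerset] at hA
          obtain ⟨hAT, htA⟩ := hA
          have h1 : ∑ i ∈ A, z i = z t + ∑ i ∈ A.erase t, z i :=
            (Finset.add_sum_erase A z htA).symm
          have h2 : A.card - 1 = (A.erase t).card := by
            rw [Finset.card_erase_of_mem htA]
          have h3 : T \ A = (T.erase t) \ (A.erase t) := by
            ext b
            simp only [Finset.mem_sdiff, Finset.mem_erase]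
            constructor
            · intro ⟨hbT, hbA⟩
              exact ⟨⟨fun h => hbA (h ▸ htA), hbT⟩, fun ⟨_, hbA'⟩ => hbA hbA'⟩
            · intro ⟨⟨hbt, hbT⟩, hbA⟩
              exact ⟨hbT, fun h => hbA ⟨hbt, h⟩⟩
          rw [h1, h2, h3, ← add_assoc, mul_comm]
      rw [hbij]
      have hc : (T.erase t).card = T.card - 1 := Finset.card_erase_of_mem ht
      rw [IH (T.card - 1) (by omega) (T.erase t) hc (w + z t) y, hc,
        ← Finset.add_sum_erase T z ht]
      ring_nf
    rw [Finset.sum_congr rfl step2, Finset.sum_const, nsmul_eq_mul]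
  -- both vanish at -(y + sum z)
  have hPzero : P.eval (-(y + ∑ i ∈ T, z i)) = 0 := by
    rw [hevalP]
    have hre : ∑ A ∈ T.powerset, (-(y + ∑ i ∈ T, z i) + ∑ i ∈ A, z i) ^ A.card
          * hfun z y (T \ A)
        = ∑ B ∈ T.powerset, y * ((-1:ℂ)^(T.card - B.card)
          * ((Polynomial.X + Polynomial.C y)^(T.card - 1)).eval (∑ i ∈ B, z i)) := by
      refine Finset.sum_nbij' (fun A => T \ A) (fun B => T \ B) ?_ ?_ ?_ ?_ ?_
      · intro A _; exact Finset.mem_powerset.mpr (Finset.sdiff_subset)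
      · intro B _; exact Finset.mem_powerset.mpr (Finset.sdiff_subset)
      · intro A hA; exact Finset.sdiff_sdiff_eq_self (Finset.mem_powerset.mp hA)
      · intro B hB; exact Finset.sdiff_sdiff_eq_self (Finset.mem_powerset.mp hB)
      · intro A hA
        have hAT : A ⊆ T := Finset.mem_powerset.mp hA
        set B := T \ A with hB
        have hzB : ∑ i ∈ A, z i = (∑ i ∈ T, z i) - ∑ i ∈ B, z i := by
          rw [hB, eq_sub_iff_add_eq, add_comm, Finset.sum_sdiff hAT]
        have hfront : -(y + ∑ i ∈ T, z i) + ∑ i ∈ A, z i = -(y + ∑ i ∈ B, z i) := by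
          rw [hzB]; ring
        have hcardB : T.card - B.card = A.card := by
          rw [hB, Finset.card_sdiff_of_subset hAT]
          have := Finset.card_le_card hAT
          omega
        rw [hfront, neg_pow, Polynomial.eval_pow]
        simp only [Polynomial.eval_add, Polynomial.eval_X, Polynomial.eval_C]
        rw [hcardB]
        by_cases hBe : B = ∅
        · have hAT' : A = T := by
            rw [hB] at hBe
            exact Finset.Subset.antisymm hAT (Finset.sdiff_eq_empty_iff_subset.mp hBe)
          rw [hfun, if_pos hBe, hBe, mul_one, hAT']
          simp only [Finset.sum_empty, add_zero, zero_add]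
          have hy : y ^ T.card = y * y ^ (T.card - 1) := by
            rw [← pow_succ']; congr 1; omega
          rw [hy]; ring
        · rw [hfun, if_neg hBe]
          have hB1 : 1 ≤ B.card := Finset.card_pos.mpr (Finset.nonempty_iff_ne_empty.mpr hBe)
          have hBle : B.card ≤ T.card := Finset.card_le_card (by rw [hB]; exact Finset.sdiff_subset)
          have hexp : A.card + (B.card - 1) = T.card - 1 := by
            have : A.card + B.card = T.card := by
              rw [hB, Finset.card_sdiff_of_subset hAT] at *
              have := Finset.card_le_card hAT
              omega
            omega
          rw [add_comm (∑ i ∈ B, z i) y, ← hexp, pow_add]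
          ring
    rw [hre, ← Finset.mul_sum,
      alt_sum z T ((Polynomial.X + Polynomial.C y)^(T.card - 1)) (by
        rw [Polynomial.natDegree_pow, Polynomial.natDegree_X_add_C]
        omega), mul_zero]
  have hQzero : Q.eval (-(y + ∑ i ∈ T, z i)) = 0 := by
    rw [hevalQ]
    rw [show -(y + ∑ i ∈ T, z i) + y + ∑ i ∈ T, z i = 0 by ring]
    exact zero_pow (by omega)
  have hPQ : P = Q := by
    have hdd : Polynomial.derivative (P - Q) = 0 := by
      rw [map_sub, sub_eq_zero]
      exact Polynomial.funext hder
    have ha := Polynomial.eq_C_of_derivative_eq_zero hdd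
    have h0 : (P - Q).coeff 0 = 0 := by
      have h2 := congrArg (Polynomial.eval (-(y + ∑ i ∈ T, z i))) ha
      rw [Polynomial.eval_sub, hPzero, hQzero, Polynomial.eval_C] at h2
      simpa using h2.symm
    rw [h0, map_zero] at ha
    exact sub_eq_zero.mp ha
  have := congrArg (Polynomial.eval X₀) hPQ
  rw [hevalP, hevalQ] at this
  exact this

def Parts (S : Finset ι) : Finset (Finset (Finset ι)) :=
  S.powerset.powerset.filter (fun P => (∅ : Finset ι) ∉ P ∧
    (∀ I ∈ P, ∀ J ∈ P, I ≠ J → Disjoint I J) ∧ P.sup id = S)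

lemma mem_Parts {S : Finset ι} {P : Finset (Finset ι)} :
    P ∈ Parts S ↔ (∅ : Finset ι) ∉ P ∧
      (∀ I ∈ P, ∀ J ∈ P, I ≠ J → Disjoint I J) ∧ P.sup id = S := by
  constructor
  · exact fun h => (Finset.mem_filter.mp h).2
  · intro h
    refine Finset.mem_filter.mpr ⟨?_, h⟩
    rw [Finset.mem_powerset]
    intro I hI
    rw [Finset.mem_powerset]
    exact h.2.2 ▸ Finset.le_sup (f := id) hI

lemma Parts_empty : Parts (∅ : Finset ι) = {∅} := by
  ext P
  simp only [mem_Parts, Finset.mem_singleton]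
  constructor
  · rintro ⟨h1, _, h3⟩
    by_contra hne
    obtain ⟨I, hI⟩ := Finset.nonempty_iff_ne_empty.mpr hne
    have hsub : I ⊆ ∅ := h3 ▸ Finset.le_sup (f := id) hI
    exact h1 ((Finset.subset_empty.mp hsub) ▸ hI)
  · rintro rfl
    exact ⟨Finset.notMem_empty _, by simp, rfl⟩

lemma Parts_card_sum {S : Finset ι} {P : Finset (Finset ι)} (h : P ∈ Parts S) :
    ∑ I ∈ P, I.card = S.card := by
  rw [mem_Parts] at h
  obtain ⟨h1, h2, h3⟩ := h
  rw [← h3, Finset.sup_eq_biUnion]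
  exact (Finset.card_biUnion (fun I hI J hJ hne => h2 I hI J hJ hne)).symm

lemma Parts_card_le {S : Finset ι} {P : Finset (Finset ι)} (h : P ∈ Parts S) :
    P.card ≤ S.card := by
  have h1 := (mem_Parts.mp h).1
  calc P.card = ∑ _I ∈ P, 1 := by simp
  _ ≤ ∑ I ∈ P, I.card := Finset.sum_le_sum (fun I hI =>
      Finset.card_pos.mpr (Finset.nonempty_iff_ne_empty.mpr (fun he => h1 (he ▸ hI))))
  _ = S.card := Parts_card_sum h

lemma Parts_nonempty {S : Finset ι} {P : Finset (Finset ι)} (h : P ∈ Parts S)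
    (hS : S.Nonempty) : P.Nonempty := by
  rw [Finset.nonempty_iff_ne_empty]
  rintro rfl
  rw [mem_Parts] at h
  have := h.2.2
  simp only [Finset.sup_empty] at this
  rw [← this] at hS
  exact Finset.not_nonempty_empty hS

def blockOf (P : Finset (Finset ι)) (a : ι) : Finset ι :=
  (P.filter (fun I => a ∈ I)).sup id

lemma blockOf_eq {P : Finset (Finset ι)} {a : ι}
    (h2 : ∀ I ∈ P, ∀ J ∈ P, I ≠ J → Disjoint I J) {I : Finset ι}
    (hI : I ∈ P) (haI : a ∈ I) : blockOf P a = I := by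
  have hfilt : P.filter (fun I => a ∈ I) = {I} := by
    ext J
    simp only [Finset.mem_filter, Finset.mem_singleton]
    constructor
    · rintro ⟨hJP, haJ⟩
      by_contra hne
      exact Finset.disjoint_left.mp (h2 J hJP I hI hne) haJ haI
    · rintro rfl; exact ⟨hI, haI⟩
  rw [blockOf, hfilt, Finset.sup_singleton, id]

lemma blockOf_spec {S : Finset ι} {P : Finset (Finset ι)} {a : ι} (h : P ∈ Parts S)
    (ha : a ∈ S) : blockOf P a ∈ P ∧ a ∈ blockOf P a := by
  rw [mem_Parts] at h
  obtain ⟨h1, h2, h3⟩ := h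
  have hmem : a ∈ P.sup id := h3.symm ▸ ha
  rw [Finset.sup_eq_biUnion, Finset.mem_biUnion] at hmem
  obtain ⟨I, hIP, haI⟩ := hmem
  rw [blockOf_eq h2 hIP haI]
  exact ⟨hIP, haI⟩

lemma block_subset {S : Finset ι} {P : Finset (Finset ι)} (h : P ∈ Parts S)
    {I : Finset ι} (hI : I ∈ P) : I ⊆ S := by
  rw [mem_Parts] at h
  exact h.2.2 ▸ Finset.le_sup (f := id) hI

lemma erase_mem_Parts {S : Finset ι} {P : Finset (Finset ι)} (h : P ∈ Parts S)
    {I : Finset ι} (hI : I ∈ P) : P.erase I ∈ Parts (S \ I) := by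
  have hmem := mem_Parts.mp h
  obtain ⟨h1, h2, h3⟩ := hmem
  rw [mem_Parts]
  refine ⟨fun he => h1 (Finset.mem_of_mem_erase he),
    fun J hJ K hK hne => h2 J (Finset.mem_of_mem_erase hJ) K (Finset.mem_of_mem_erase hK) hne,
    ?_⟩
  apply le_antisymm
  · apply Finset.sup_le
    intro J hJ
    obtain ⟨hne, hJP⟩ := Finset.mem_erase.mp hJ
    show J ⊆ S \ I
    rw [Finset.subset_sdiff]
    exact ⟨block_subset h hJP, h2 J hJP I hI hne⟩
  · intro b hb
    obtain ⟨hbS, hbI⟩ := Finset.mem_sdiff.mp hb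
    have : b ∈ P.sup id := h3.symm ▸ hbS
    rw [Finset.sup_eq_biUnion, Finset.mem_biUnion] at this
    obtain ⟨J, hJP, hbJ⟩ := this
    rw [Finset.sup_eq_biUnion, Finset.mem_biUnion]
    exact ⟨J, Finset.mem_erase.mpr ⟨fun he => hbI (he ▸ hbJ), hJP⟩, hbJ⟩

lemma insert_mem_Parts {S : Finset ι} {I : Finset ι} (hIS : I ⊆ S) (hIne : I.Nonempty)
    {P' : Finset (Finset ι)} (h : P' ∈ Parts (S \ I)) : insert I P' ∈ Parts S := by
  have hmem := mem_Parts.mp h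
  obtain ⟨h1, h2, h3⟩ := hmem
  have hblock : ∀ J ∈ P', J ⊆ S \ I := fun J hJ => block_subset h hJ
  rw [mem_Parts]
  refine ⟨?_, ?_, ?_⟩
  · intro he
    rcases Finset.mem_insert.mp he with he | he
    · exact Finset.nonempty_iff_ne_empty.mp hIne he.symm
    · exact h1 he
  · intro J hJ K hK hne
    rcases Finset.mem_insert.mp hJ with rfl | hJ' <;>
      rcases Finset.mem_insert.mp hK with rfl | hK'
    · exact absurd rfl hne
    · exact Finset.disjoint_right.mpr (fun b hb =>
        (Finset.mem_sdiff.mp (hblock _ hK' hb)).2)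
    · exact Finset.disjoint_left.mpr (fun b hb =>
        (Finset.mem_sdiff.mp (hblock _ hJ' hb)).2)
    · exact h2 J hJ' K hK' hne
  · rw [Finset.sup_insert, h3, id]
    exact Finset.union_sdiff_of_subset hIS

lemma mainL (x : ι → ℂ) (y : ℂ) : ∀ (n : ℕ) (S : Finset ι), S.card = n → S.Nonempty →
    ∑ P ∈ Parts S, y ^ (P.card - 1) * ∏ I ∈ P, (∑ i ∈ I, x i) ^ (I.card - 1)
      = (y + ∑ i ∈ S, x i) ^ (S.card - 1) := by
  intro n
  induction n using Nat.strong_induction_on with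
  | _ n IH =>
  intro S hS hSne
  obtain ⟨a, ha⟩ := hSne
  have key : ∑ P ∈ Parts S, y ^ (P.card - 1) * ∏ I ∈ P, (∑ i ∈ I, x i) ^ (I.card - 1)
      = ∑ IP ∈ (S.powerset.filter (fun I => a ∈ I)).sigma (fun I => Parts (S \ I)),
          (∑ i ∈ IP.1, x i) ^ (IP.1.card - 1) *
            (y ^ IP.2.card * ∏ J ∈ IP.2, (∑ i ∈ J, x i) ^ (J.card - 1)) := by
    refine Finset.sum_nbij' (fun P => ⟨blockOf P a, P.erase (blockOf P a)⟩)
      (fun IP => insert IP.1 IP.2) ?_ ?_ ?_ ?_ ?_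
    · intro P hP
      obtain ⟨hbP, hab⟩ := blockOf_spec hP ha
      rw [Finset.mem_sigma]
      constructor
      · rw [Finset.mem_filter, Finset.mem_powerset]
        exact ⟨block_subset hP hbP, hab⟩
      · exact erase_mem_Parts hP hbP
    · intro IP hIP
      rw [Finset.mem_sigma, Finset.mem_filter, Finset.mem_powerset] at hIP
      exact insert_mem_Parts hIP.1.1 ⟨a, hIP.1.2⟩ hIP.2
    · intro P hP
      exact Finset.insert_erase (blockOf_spec hP ha).1
    · rintro ⟨I, P'⟩ hIP
      rw [Finset.mem_sigma, Finset.mem_filter, Finset.mem_powerset] at hIP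
      obtain ⟨⟨hIS, haI⟩, hP'⟩ := hIP
      have hInotP' : I ∉ P' := by
        intro hmem
        have := Finset.mem_sdiff.mp (block_subset hP' hmem haI)
        exact this.2 haI
      have hpair := (mem_Parts.mp (insert_mem_Parts hIS ⟨a, haI⟩ hP')).2.1
      have hb : blockOf (insert I P') a = I :=
        blockOf_eq hpair (Finset.mem_insert_self _ _) haI
      dsimp only
      rw [hb, Finset.erase_insert hInotP']
    · intro P hP
      obtain ⟨hbP, _⟩ := blockOf_spec hP ha
      have hcard : (P.erase (blockOf P a)).card = P.card - 1 :=
        Finset.card_erase_of_mem hbP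
      rw [hcard, ← Finset.mul_prod_erase P _ hbP]
      ring
  rw [key, Finset.sum_sigma]
  have inner : ∀ I ∈ S.powerset.filter (fun I => a ∈ I),
      (∑ P' ∈ Parts (S \ I), (∑ i ∈ I, x i) ^ (I.card - 1) *
          (y ^ P'.card * ∏ J ∈ P', (∑ i ∈ J, x i) ^ (J.card - 1)))
        = (∑ i ∈ I, x i) ^ (I.card - 1) * hfun x y (S \ I) := by
    intro I hI
    rw [Finset.mem_filter, Finset.mem_powerset] at hI
    obtain ⟨hIS, haI⟩ := hI
    rw [← Finset.mul_sum]
    congr 1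
    by_cases hSI : S \ I = ∅
    · rw [hSI, Parts_empty, hfun, if_pos rfl]
      simp
    · have hSIne : (S \ I).Nonempty := Finset.nonempty_iff_ne_empty.mpr hSI
      have hstep : ∀ P' ∈ Parts (S \ I),
          y ^ P'.card * ∏ J ∈ P', (∑ i ∈ J, x i) ^ (J.card - 1)
          = y * (y ^ (P'.card - 1) * ∏ J ∈ P', (∑ i ∈ J, x i) ^ (J.card - 1)) := by
        intro P' hP'
        have h1 : 1 ≤ P'.card := Finset.card_pos.mpr (Parts_nonempty hP' hSIne)
        have hy : y ^ P'.card = y * y ^ (P'.card - 1) := by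
          conv_lhs => rw [show P'.card = (P'.card - 1) + 1 by omega]
          rw [pow_succ]; ring
        rw [hy]; ring
      rw [Finset.sum_congr rfl hstep, ← Finset.mul_sum]
      have hlt : (S \ I).card < n := by
        have h1 : (S \ I).card = S.card - I.card := Finset.card_sdiff_of_subset hIS
        have h2 : 1 ≤ I.card := Finset.card_pos.mpr ⟨a, haI⟩
        have h3 : I.card ≤ S.card := Finset.card_le_card hIS
        omega
      rw [IH (S \ I).card hlt (S \ I) rfl hSIne, hfun, if_neg hSI]
  rw [Finset.sum_congr rfl inner]
  -- reindex over subsets of S.erase a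
  have reind : ∑ I ∈ S.powerset.filter (fun I => a ∈ I),
      (∑ i ∈ I, x i) ^ (I.card - 1) * hfun x y (S \ I)
      = ∑ A ∈ (S.erase a).powerset,
          (x a + ∑ i ∈ A, x i) ^ A.card * hfun x y ((S.erase a) \ A) := by
    refine Finset.sum_nbij' (fun I => I.erase a) (fun A => insert a A) ?_ ?_ ?_ ?_ ?_
    · intro I hI
      rw [Finset.mem_filter, Finset.mem_powerset] at hI
      exact Finset.mem_powerset.mpr (Finset.erase_subset_erase a hI.1)
    · intro A hA
      rw [Finset.mem_powerset] at hA
      rw [Finset.mem_filter, Finset.mem_powerset]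
      refine ⟨?_, Finset.mem_insert_self a A⟩
      intro b hb
      rcases Finset.mem_insert.mp hb with rfl | hb
      · exact ha
      · exact Finset.mem_of_mem_erase (hA hb)
    · intro I hI
      rw [Finset.mem_filter] at hI
      exact Finset.insert_erase hI.2
    · intro A hA
      rw [Finset.mem_powerset] at hA
      exact Finset.erase_insert (fun h => (Finset.notMem_erase a S) (hA h))
    · intro I hI
      rw [Finset.mem_filter, Finset.mem_powerset] at hI
      obtain ⟨hIS, haI⟩ := hI
      have h1 : ∑ i ∈ I, x i = x a + ∑ i ∈ I.erase a, x i :=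
        (Finset.add_sum_erase I x haI).symm
      have h2 : I.card - 1 = (I.erase a).card := by rw [Finset.card_erase_of_mem haI]
      have h3 : S \ I = (S.erase a) \ (I.erase a) := by
        ext b
        simp only [Finset.mem_sdiff, Finset.mem_erase]
        constructor
        · intro ⟨hbS, hbI⟩
          exact ⟨⟨fun h => hbI (h ▸ haI), hbS⟩, fun ⟨_, hbI'⟩ => hbI hbI'⟩
        · intro ⟨⟨hbt, hbS⟩, hbI⟩
          exact ⟨hbS, fun h => hbI ⟨hbt, h⟩⟩
      rw [h1, h2, h3]
  rw [reind, HN x (S.erase a).card (S.erase a) rfl (x a) y,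
    Finset.card_erase_of_mem ha]
  congr 1
  rw [add_comm (x a) y, add_assoc, Finset.add_sum_erase S x ha]

theorem sum_over_block_numbers (m : ℕ) (hm : 1 ≤ m) (x : Fin m → ℂ) (y : ℂ) :
    ∑ p ∈ Finset.Icc 1 m, y ^ (p - 1)
        * ∑ P ∈ Finset.univ.filter (IsPartitionInto p (Finset.univ : Finset (Fin m))),
            ∏ I ∈ P, (∑ i ∈ I, x i) ^ (I.card - 1)
      = (y + ∑ i, x i) ^ (m - 1) := by
  have huniv : (Finset.univ : Finset (Fin m)).Nonempty := ⟨⟨0, hm⟩, Finset.mem_univ _⟩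
  have hfilter : ∀ p : ℕ,
      Finset.univ.filter (IsPartitionInto p (Finset.univ : Finset (Fin m)))
      = (Parts (Finset.univ : Finset (Fin m))).filter (fun P => P.card = p) := by
    intro p
    ext P
    simp only [Finset.mem_filter, Finset.mem_univ, true_and, IsPartitionInto, mem_Parts]
    tauto
  have step1 : ∑ p ∈ Finset.Icc 1 m, y ^ (p - 1)
        * ∑ P ∈ Finset.univ.filter (IsPartitionInto p (Finset.univ : Finset (Fin m))),
            ∏ I ∈ P, (∑ i ∈ I, x i) ^ (I.card - 1)
      = ∑ p ∈ Finset.Icc 1 m,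
          ∑ P ∈ (Parts (Finset.univ : Finset (Fin m))).filter (fun P => P.card = p),
            y ^ (P.card - 1) * ∏ I ∈ P, (∑ i ∈ I, x i) ^ (I.card - 1) := by
    refine Finset.sum_congr rfl fun p _ => ?_
    rw [hfilter p, Finset.mul_sum]
    refine Finset.sum_congr rfl fun P hP => ?_
    rw [(Finset.mem_filter.mp hP).2]
  have step2 : ∑ p ∈ Finset.Icc 1 m,
          ∑ P ∈ (Parts (Finset.univ : Finset (Fin m))).filter (fun P => P.card = p),
            y ^ (P.card - 1) * ∏ I ∈ P, (∑ i ∈ I, x i) ^ (I.card - 1)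
      = ∑ P ∈ Parts (Finset.univ : Finset (Fin m)),
            y ^ (P.card - 1) * ∏ I ∈ P, (∑ i ∈ I, x i) ^ (I.card - 1) := by
    apply Finset.sum_fiberwise_of_maps_to
    intro P hP
    rw [Finset.mem_Icc]
    refine ⟨Finset.card_pos.mpr (Parts_nonempty hP huniv), ?_⟩
    have := Parts_card_le hP
    simpa using this
  rw [step1, step2,
    mainL x y (Finset.univ : Finset (Fin m)).card (Finset.univ : Finset (Fin m)) rfl huniv]
  simp
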